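/- arXiv:1901.08503 — 4 statements merged into one kernel-verified Lean document; each statement's English description precedes it below -/
import Mathlib

section
/- The double integral ∫∫_{|b²c|≤1, |bc²|≤1} 1/max{|b|²,|c|²,1} db dc over ℝ² equals 20/3. -/
/-!
Cutting the region `|b|²|c| ≤ 1, |b||c|² ≤ 1` along `|b| = 1` and `|c| = 1` leaves the unit
square, where the weight is `1`, and two cusps `|b| > 1, |c| ≤ b⁻²` and `|c| > 1, |b| ≤ c⁻²`,
exchanged by `(b, c) ↦ (c, b)`. On the first cusp the weight is `b⁻²` and the fibre over `b`
has length `2 b⁻²`, so it contributes `∫_{|b|>1} 2 b⁻⁴ db = 4/3`. Hence the integral is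
`4 + 4/3 + 4/3 = 20/3`.
-/

open MeasureTheory Set

theorem lintegral_Ioi_rpow_of_lt {a c : ℝ} (ha : a < -1) (hc : 0 < c) :
    ∫⁻ x in Ioi c, ENNReal.ofReal (x ^ a) = ENNReal.ofReal (-c ^ (a + 1) / (a + 1)) := by
  rw [← integral_Ioi_rpow_of_lt ha hc, ofReal_integral_eq_lintegral_ofReal
    (integrableOn_Ioi_rpow_of_lt ha hc)]
  filter_upwards [ae_restrict_mem measurableSet_Ioi] with x hx
  exact Real.rpow_nonneg (hc.trans hx).le a

theorem setLIntegral_lt_abs_eq_two_mul_of_even {f : ℝ → ENNReal} (heven : ∀ x, f (-x) = f x)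
    {a : ℝ} (ha : 0 ≤ a) : ∫⁻ x in {x | a < |x|}, f x = 2 * ∫⁻ x in Ioi a, f x := by
  have hsplit : {x : ℝ | a < |x|} = Iio (-a) ∪ Ioi a := by
    ext x; simp only [mem_ofPred_eq, lt_abs, mem_union, mem_Iio, mem_Ioi, lt_neg]; tauto
  have hneg : ∫⁻ x in Iio (-a), f x = ∫⁻ x in Ioi a, f x := by
    rw [← (Measure.measurePreserving_neg volume).setLIntegral_comp_preimage_emb
      (Homeomorph.neg ℝ).measurableEmbedding]
    simp [heven]
  rw [hsplit, lintegral_union measurableSet_Ioi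
    ((Iic_disjoint_Ioi (by linarith)).mono_left Iio_subset_Iic_self), hneg, two_mul]

theorem setLIntegral_fst_abs_snd_le {s : Set ℝ} (hs : MeasurableSet s) {h : ℝ → ℝ}
    (hh : Measurable h) {g : ℝ → ENNReal} (hg : Measurable g) :
    ∫⁻ q in {q : ℝ × ℝ | q.1 ∈ s ∧ |q.2| ≤ h q.1}, g q.1
      = ∫⁻ x in s, g x * ENNReal.ofReal (2 * h x) := by
  have hm : MeasurableSet {q : ℝ × ℝ | q.1 ∈ s ∧ |q.2| ≤ h q.1} :=
    (measurable_fst hs).inter (measurableSet_le measurable_snd.abs (hh.comp measurable_fst))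
  have hgm : Measurable fun q : ℝ × ℝ => g q.1 := hg.comp measurable_fst
  rw [← lintegral_indicator hm, Measure.volume_eq_prod,
    lintegral_prod _ (hgm.indicator hm).aemeasurable, ← lintegral_indicator hs]
  congr 1 with x
  by_cases hx : x ∈ s
  · have hfiber : ∀ y, {q : ℝ × ℝ | q.1 ∈ s ∧ |q.2| ≤ h q.1}.indicator (fun q => g q.1) (x, y)
        = (Icc (-h x) (h x)).indicator (fun _ => g x) y := by
      classical
      intro y
      simp only [indicator_apply, mem_ofPred_eq, hx, true_and, mem_Icc, ← abs_le]
    rw [lintegral_congr hfiber, lintegral_indicator measurableSet_Icc, setLIntegral_const,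
      Real.volume_Icc, indicator_of_mem hx]
    ring_nf
  · simp [hx]

theorem sq_mul_le_one_and_mul_sq_le_one_iff_of_one_lt {x y : ℝ} (hx : 1 < x) (hy : 0 ≤ y) :
    x ^ 2 * y ≤ 1 ∧ x * y ^ 2 ≤ 1 ↔ y ≤ (x ^ 2)⁻¹ := by
  rw [← one_div, le_div_iff₀' (by positivity)]
  refine ⟨And.left, fun h => ⟨h, ?_⟩⟩
  have hyx : y ≤ x := by nlinarith
  nlinarith [mul_nonneg (mul_nonneg (zero_le_one.trans hx.le) hy) (sub_nonneg.2 hyx)]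

theorem sq_mul_le_one_and_mul_sq_le_one_iff {x y : ℝ} (hx : 0 ≤ x) (hy : 0 ≤ y) :
    x ^ 2 * y ≤ 1 ∧ x * y ^ 2 ≤ 1 ↔
      (x ≤ 1 ∧ y ≤ 1) ∨ (1 < x ∧ y ≤ (x ^ 2)⁻¹) ∨ (1 < y ∧ x ≤ (y ^ 2)⁻¹) := by
  have hinv {t : ℝ} (ht : 1 < t) : (t ^ 2)⁻¹ < 1 := inv_lt_one_of_one_lt₀ (by nlinarith)
  rcases le_or_gt x 1 with hx1 | hx1 <;> rcases le_or_gt y 1 with hy1 | hy1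
  · simp only [hx1, hy1, true_and, true_or, iff_true]
    constructor <;> nlinarith [mul_nonneg hx hy]
  · rw [and_comm, mul_comm, mul_comm (x ^ 2),
      sq_mul_le_one_and_mul_sq_le_one_iff_of_one_lt hy1 hx]
    simp only [hy1, true_and, hx1.not_gt, false_and, false_or, hy1.not_ge, and_false]
  · rw [sq_mul_le_one_and_mul_sq_le_one_iff_of_one_lt hx1 hy]
    simp only [hx1, true_and, hx1.not_ge, false_and, false_or, hy1.not_gt, or_false]
  · constructor
    · rintro ⟨h, -⟩; nlinarith
    · rintro (⟨h, -⟩ | ⟨-, h⟩ | ⟨-, h⟩) <;> linarith [hinv hx1, hinv hy1]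

namespace BlowupConicVolume

def square : Set (ℝ × ℝ) := Icc (-1 : ℝ) 1 ×ˢ Icc (-1 : ℝ) 1

def cusp : Set (ℝ × ℝ) := {q | 1 < |q.1| ∧ |q.2| ≤ (q.1 ^ 2)⁻¹}

noncomputable def weight (q : ℝ × ℝ) : ℝ := 1 / max (max (|q.1| ^ 2) (|q.2| ^ 2)) 1

theorem region_eq_square_union_cusp :
    {q : ℝ × ℝ | |q.1 ^ 2 * q.2| ≤ 1 ∧ |q.1 * q.2 ^ 2| ≤ 1}
      = square ∪ cusp ∪ Prod.swap ⁻¹' cusp := by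
  ext ⟨b, c⟩
  simp only [mem_ofPred_eq, mem_union, square, cusp, mem_prod, mem_Icc, ← abs_le, mem_preimage,
    Prod.swap_prod_mk, abs_mul, abs_pow]
  rw [sq_mul_le_one_and_mul_sq_le_one_iff (abs_nonneg b) (abs_nonneg c), sq_abs, sq_abs,
    or_assoc]

theorem abs_snd_lt_one_of_mem_cusp {q : ℝ × ℝ} (hq : q ∈ cusp) : |q.2| < 1 :=
  hq.2.trans_lt (inv_lt_one_of_one_lt₀ (by nlinarith [hq.1, sq_abs q.1, abs_nonneg q.1]))

theorem disjoint_square_cusp : Disjoint square cusp :=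
  disjoint_left.2 fun _ hs hc => (abs_le.2 hs.1).not_gt hc.1

theorem disjoint_square_union_cusp_preimage_swap :
    Disjoint (square ∪ cusp) (Prod.swap ⁻¹' cusp) := by
  refine disjoint_left.2 fun q hq hc => ?_
  rcases hq with hs | hc'
  · exact (abs_le.2 hs.2).not_gt hc.1
  · exact (abs_snd_lt_one_of_mem_cusp hc).not_gt hc'.1

theorem measurableSet_square : MeasurableSet square :=
  measurableSet_Icc.prod measurableSet_Icc

theorem measurableSet_cusp : MeasurableSet cusp :=
  (measurableSet_lt measurable_const measurable_fst.abs).inter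
    (measurableSet_le measurable_snd.abs (measurable_fst.pow_const 2).inv)

theorem weight_swap (q : ℝ × ℝ) : weight q.swap = weight q := by
  simp only [weight, Prod.fst_swap, Prod.snd_swap, max_comm (|q.2| ^ 2)]

theorem continuous_weight : Continuous weight :=
  continuous_const.div
    (((continuous_fst.abs.pow 2).max (continuous_snd.abs.pow 2)).max continuous_const)
    fun _ => (zero_lt_one.trans_le (le_max_right _ _)).ne'

theorem weight_eq_one_of_mem_square {q : ℝ × ℝ} (hq : q ∈ square) : weight q = 1 := by
  obtain ⟨hb, hc⟩ := hq
  rw [mem_Icc, ← abs_le, ← sq_le_one_iff₀ (abs_nonneg _)] at hb hc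
  rw [weight, max_eq_right (max_le hb hc), div_one]

theorem weight_eq_of_mem_cusp {q : ℝ × ℝ} (hq : q ∈ cusp) : weight q = (q.1 ^ 2)⁻¹ := by
  have hb2 : 1 < |q.1| ^ 2 := one_lt_pow₀ hq.1 two_ne_zero
  have hcb : |q.2| ^ 2 ≤ |q.1| ^ 2 := by
    nlinarith [abs_nonneg q.2, abs_snd_lt_one_of_mem_cusp hq]
  rw [weight, max_eq_left hcb, max_eq_left hb2.le, one_div, sq_abs]

theorem setLIntegral_square_weight :
    ∫⁻ q in square, ENNReal.ofReal (weight q) = ENNReal.ofReal 4 := by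
  rw [setLIntegral_congr_fun measurableSet_square
      fun q hq => by rw [weight_eq_one_of_mem_square hq],
    setLIntegral_const, ENNReal.ofReal_one, one_mul, square, Measure.volume_eq_prod,
    Measure.prod_prod, Real.volume_Icc]
  norm_num

theorem setLIntegral_cusp_weight :
    ∫⁻ q in cusp, ENNReal.ofReal (weight q) = ENNReal.ofReal (4 / 3) := by
  have hintegrand {x : ℝ} (hx : 1 < x) : ENNReal.ofReal (x ^ 2)⁻¹ * ENNReal.ofReal (2 * (x ^ 2)⁻¹)
      = 2 * ENNReal.ofReal (x ^ (-4 : ℝ)) := by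
    have hpow : x ^ (-4 : ℝ) = (x ^ 2)⁻¹ * (x ^ 2)⁻¹ := by
      rw [show (-4 : ℝ) = -(4 : ℕ) by norm_num, Real.rpow_neg (by linarith), Real.rpow_natCast]
      ring
    rw [← ENNReal.ofReal_mul (by positivity), hpow, ← ENNReal.ofReal_ofNat 2,
      ← ENNReal.ofReal_mul zero_le_two]
    ring_nf
  have hinv_sq : Measurable fun x : ℝ => (x ^ 2)⁻¹ := (measurable_id.pow_const 2).inv
  calc ∫⁻ q in cusp, ENNReal.ofReal (weight q)
      = ∫⁻ q in cusp, ENNReal.ofReal (q.1 ^ 2)⁻¹ :=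
        setLIntegral_congr_fun measurableSet_cusp fun q hq => by rw [weight_eq_of_mem_cusp hq]
    _ = ∫⁻ x in {x : ℝ | 1 < |x|}, ENNReal.ofReal (x ^ 2)⁻¹ * ENNReal.ofReal (2 * (x ^ 2)⁻¹) :=
        setLIntegral_fst_abs_snd_le (measurableSet_lt measurable_const measurable_abs) hinv_sq
          (ENNReal.measurable_ofReal.comp hinv_sq)
    _ = 2 * ∫⁻ x in Ioi 1, ENNReal.ofReal (x ^ 2)⁻¹ * ENNReal.ofReal (2 * (x ^ 2)⁻¹) :=
        setLIntegral_lt_abs_eq_two_mul_of_even (fun x => by rw [neg_sq]) zero_le_one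
    _ = 2 * ∫⁻ x in Ioi 1, 2 * ENNReal.ofReal (x ^ (-4 : ℝ)) := by
        rw [setLIntegral_congr_fun measurableSet_Ioi fun x hx => hintegrand hx]
    _ = ENNReal.ofReal (4 / 3) := by
        rw [lintegral_const_mul' _ _ ENNReal.ofNat_ne_top,
          lintegral_Ioi_rpow_of_lt (by norm_num) one_pos, ← mul_assoc,
          ← ENNReal.ofReal_ofNat 2, ← ENNReal.ofReal_mul zero_le_two,
          ← ENNReal.ofReal_mul (by norm_num)]
        norm_num

theorem setLIntegral_preimage_swap_cusp_weight :
    ∫⁻ q in Prod.swap ⁻¹' cusp, ENNReal.ofReal (weight q)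
      = ∫⁻ q in cusp, ENNReal.ofReal (weight q) := by
  rw [Measure.volume_eq_prod]
  simpa only [weight_swap] using
    (Measure.measurePreserving_swap (μ := volume) (ν := volume)).setLIntegral_comp_preimage_emb
      MeasurableEquiv.prodComm.measurableEmbedding (fun q => ENNReal.ofReal (weight q)) cusp

end BlowupConicVolume

open BlowupConicVolume

/-- The archimedean volume integral for `D₂`:
`∫∫_{|b²c|≤1, |bc²|≤1} 1 / max{|b|², |c|², 1} db dc = 20/3`. -/
theorem integral_case_V_a :
    (∫ q in {q : ℝ × ℝ | |q.1 ^ 2 * q.2| ≤ 1 ∧ |q.1 * q.2 ^ 2| ≤ 1},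
      1 / max (max (|q.1| ^ 2) (|q.2| ^ 2)) 1) = 20 / 3 := by
  change ∫ q in _, weight q = _
  rw [integral_eq_lintegral_of_nonneg_ae (ae_of_all _ fun q => by unfold weight; positivity)
      continuous_weight.aestronglyMeasurable, region_eq_square_union_cusp,
    lintegral_union (measurableSet_cusp.preimage measurable_swap)
      disjoint_square_union_cusp_preimage_swap,
    lintegral_union measurableSet_cusp disjoint_square_cusp, setLIntegral_preimage_swap_cusp_weight,
    setLIntegral_square_weight, setLIntegral_cusp_weight,
    ← ENNReal.ofReal_add (by norm_num) (by norm_num),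
    ← ENNReal.ofReal_add (by norm_num) (by norm_num),
    ENNReal.toReal_ofReal (by norm_num)]
  norm_num
end

section
/- Let μ(a,c) be Lebesgue measure on ℝ². Then the sum of the three integrals I₁ = ∫_{|a|≤1, |a²c|≤1} 1/max{|c|²,1} dμ, I₂ = ∫_{|a|>1, |c|≤|a|} |a|^{-3} dμ, and I₃ = ∫_{|c|>|a|, |a²c|>1} 1/max{|c|², |a²c|} dμ equals 20. -/
/-!
Both the regions and the integrands depend only on `(|a|, |c|)`, so each integral is four times
the corresponding integral over the open quadrant `x, y > 0`. By Tonelli this is an iterated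
integral whose inner integral in `y` is elementary on each piece where the region's inequalities
and the maximum are resolved: it is `2 - x²` (for `x ≤ 1`, else `0`) in `I₁`, `x⁻²` (for `x > 1`,
else `0`) in `I₂`, and `x²` resp. `(log x + 1) / x²` for `x ≤ 1` resp. `x > 1` in `I₃`. Integrating in `x` gives
`I₁ = 4 · 5/3`, `I₂ = 4 · 1`, `I₃ = 4 · 7/3`. The computation is done with `lintegral`, where
Tonelli's theorem and splitting the range of integration need no integrability hypotheses.
-/

open MeasureTheory Set Filter Topology
open scoped ENNReal

section Order

variable {α : Type*} [LinearOrder α] [TopologicalSpace α] [OrderClosedTopology α]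
  [MeasurableSpace α] [OpensMeasurableSpace α] {μ : Measure α}

theorem lintegral_Ioi_eq_Ioc_add_Ioi (f : α → ℝ≥0∞) {a b : α} (hab : a ≤ b) :
    ∫⁻ x in Ioi a, f x ∂μ = ∫⁻ x in Ioc a b, f x ∂μ + ∫⁻ x in Ioi b, f x ∂μ := by
  rw [← Ioc_union_Ioi_eq_Ioi hab, lintegral_union measurableSet_Ioi Ioc_disjoint_Ioi_same]

end Order

theorem lintegral_comp_abs (f : ℝ → ℝ≥0∞) : ∫⁻ x, f |x| = 2 * ∫⁻ x in Ioi 0, f x := by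
  have hneg : ∫⁻ x in Iio 0, f |x| = ∫⁻ x in Ioi 0, f x := by
    rw [← (Measure.measurePreserving_neg volume).setLIntegral_comp_preimage_emb
      (Homeomorph.neg ℝ).measurableEmbedding f (Ioi 0)]
    simp only [neg_preimage, neg_Ioi, neg_zero]
    exact setLIntegral_congr_fun measurableSet_Iio fun x hx => by rw [abs_of_neg hx]
  have hpos : ∫⁻ x in Ici 0, f |x| = ∫⁻ x in Ioi 0, f x := by
    rw [setLIntegral_congr Ioi_ae_eq_Ici.symm]
    exact setLIntegral_congr_fun measurableSet_Ioi fun x hx => by rw [abs_of_pos hx]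
  rw [← setLIntegral_univ, ← Iio_union_Ici (a := (0 : ℝ)),
    lintegral_union measurableSet_Ici (Iio_disjoint_Ici le_rfl), hneg, hpos, two_mul]

theorem integral_eq_four_mul_of_lintegral_quadrant {f : ℝ × ℝ → ℝ} (F : ℝ → ℝ → ℝ) {v : ℝ}
    (hf : Measurable f) (hf0 : 0 ≤ f) (hfF : ∀ q, f q = F |q.1| |q.2|)
    (hF : ∫⁻ x in Ioi 0, ∫⁻ y in Ioi 0, ENNReal.ofReal (F x y) = ENNReal.ofReal v)
    (hv : 0 ≤ v) :
    ∫ q, f q = 4 * v := by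
  have hlin : ∫⁻ q, ENNReal.ofReal (f q) = 4 * ENNReal.ofReal v := by
    rw [Measure.volume_eq_prod, lintegral_prod _ hf.ennreal_ofReal.aemeasurable]
    have hslice (a : ℝ) := lintegral_comp_abs fun y => ENNReal.ofReal (F |a| y)
    simp_rw [hfF, hslice]
    rw [lintegral_const_mul' _ _ ENNReal.ofNat_ne_top,
      lintegral_comp_abs fun x => ∫⁻ y in Ioi 0, ENNReal.ofReal (F x y), hF, ← mul_assoc]
    norm_num
  rw [integral_eq_lintegral_of_nonneg_ae (ae_of_all _ hf0) hf.aestronglyMeasurable, hlin,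
    ENNReal.toReal_mul, ENNReal.toReal_ofReal hv]
  norm_num

theorem lintegral_Ioc_ofReal_of_hasDerivAt_of_nonneg {g g' : ℝ → ℝ} {a b : ℝ} (hab : a ≤ b)
    (hderiv : ∀ x ∈ Icc a b, HasDerivAt g (g' x) x) (g'pos : ∀ x ∈ Ioc a b, 0 ≤ g' x) :
    ∫⁻ x in Ioc a b, ENNReal.ofReal (g' x) = ENNReal.ofReal (g b - g a) := by
  have hcont : ContinuousOn g (Icc a b) := fun x hx =>
    (hderiv x hx).continuousAt.continuousWithinAt
  have hderiv' : ∀ x ∈ Ioo a b, HasDerivAt g (g' x) x := fun x hx =>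
    hderiv x (Ioo_subset_Icc_self hx)
  have hint : IntegrableOn g' (Ioc a b) := intervalIntegral.integrableOn_deriv_of_nonneg hcont
    hderiv' fun x hx => g'pos x (Ioo_subset_Ioc_self hx)
  rw [← ofReal_integral_eq_lintegral_ofReal hint
      ((ae_restrict_iff' measurableSet_Ioc).2 (ae_of_all _ g'pos)),
    ← intervalIntegral.integral_of_le hab, intervalIntegral.integral_eq_sub_of_hasDerivAt_of_le
      hab hcont hderiv' ((intervalIntegrable_iff_integrableOn_Ioc_of_le hab).2 hint)]

theorem lintegral_Ioi_ofReal_of_hasDerivAt_of_nonneg {g g' : ℝ → ℝ} {a l : ℝ}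
    (hderiv : ∀ x ∈ Ici a, HasDerivAt g (g' x) x) (g'pos : ∀ x ∈ Ioi a, 0 ≤ g' x)
    (hg : Tendsto g atTop (𝓝 l)) :
    ∫⁻ x in Ioi a, ENNReal.ofReal (g' x) = ENNReal.ofReal (l - g a) := by
  rw [← ofReal_integral_eq_lintegral_ofReal (integrableOn_Ioi_deriv_of_nonneg' hderiv g'pos hg)
      ((ae_restrict_iff' measurableSet_Ioi).2 (ae_of_all _ g'pos)),
    integral_Ioi_of_hasDerivAt_of_nonneg' hderiv g'pos hg]

theorem hasDerivAt_neg_inv {x : ℝ} (hx : x ≠ 0) : HasDerivAt (fun y => -y⁻¹) (x ^ 2)⁻¹ x := by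
  simpa using (hasDerivAt_inv hx).fun_neg

theorem lintegral_Ioc_inv_sq {a b : ℝ} (ha : 0 < a) (hab : a ≤ b) :
    ∫⁻ y in Ioc a b, ENNReal.ofReal (y ^ 2)⁻¹ = ENNReal.ofReal (a⁻¹ - b⁻¹) := by
  rw [lintegral_Ioc_ofReal_of_hasDerivAt_of_nonneg hab
    (fun y hy => hasDerivAt_neg_inv (ha.trans_le hy.1).ne') fun y _ => by positivity]
  ring_nf

theorem lintegral_Ioi_inv_sq {a : ℝ} (ha : 0 < a) :
    ∫⁻ y in Ioi a, ENNReal.ofReal (y ^ 2)⁻¹ = ENNReal.ofReal a⁻¹ := by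
  rw [lintegral_Ioi_ofReal_of_hasDerivAt_of_nonneg
    (fun y hy => hasDerivAt_neg_inv (ha.trans_le hy).ne') (fun y _ => by positivity)
    (by simpa using tendsto_inv_atTop_zero.neg)]
  ring_nf

theorem lintegral_Ioi_one_log_add_one_div_sq :
    ∫⁻ x in Ioi 1, ENNReal.ofReal ((Real.log x + 1) / x ^ 2) = ENNReal.ofReal 2 := by
  have hderiv : ∀ x ∈ Ici (1 : ℝ),
      HasDerivAt (fun y => -(Real.log y + 2) / y) ((Real.log x + 1) / x ^ 2) x := by
    intro x hx
    have hx0 : x ≠ 0 := (one_pos.trans_le hx).ne'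
    refine (((Real.hasDerivAt_log hx0).add_const 2).fun_neg.fun_div (hasDerivAt_id' x)
      hx0).congr_deriv ?_
    field_simp
    ring
  have hlim : Tendsto (fun y => -(Real.log y + 2) / y) atTop (𝓝 0) := by
    have hlog : Tendsto (fun y => Real.log y / y) atTop (𝓝 0) := by
      simpa using Real.tendsto_pow_log_div_mul_add_atTop 1 0 1 one_ne_zero
    have := (hlog.add (tendsto_inv_atTop_zero.const_mul 2)).neg
    simp only [mul_zero, add_zero, neg_zero] at this
    exact this.congr fun y => by ring
  rw [lintegral_Ioi_ofReal_of_hasDerivAt_of_nonneg hderiv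
    (fun x hx => by have := Real.log_nonneg hx.le; positivity) hlim]
  simp

-- `quadrantDensityᵢ |a| |c|` is the integrand of `Iᵢ` extended by zero outside its region.
noncomputable def quadrantDensity₁ (x y : ℝ) : ℝ :=
  if x ≤ 1 ∧ x ^ 2 * y ≤ 1 then 1 / max (y ^ 2) 1 else 0

theorem lintegral_quadrantDensity₁_of_le_one {x : ℝ} (hx0 : 0 < x) (hx1 : x ≤ 1) :
    ∫⁻ y in Ioi 0, ENNReal.ofReal (quadrantDensity₁ x y) = ENNReal.ofReal (2 - x ^ 2) := by
  have hx2 : 0 < x ^ 2 := by positivity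
  have hx21 : x ^ 2 ≤ 1 := by nlinarith
  have hb : 1 ≤ 1 / x ^ 2 := by rw [le_div_iff₀ hx2]; linarith
  have hlow : EqOn (fun y => ENNReal.ofReal (quadrantDensity₁ x y)) 1 (Ioc 0 1) := by
    intro y ⟨hy0, hy1⟩
    have hxy : x ^ 2 * y ≤ 1 := by nlinarith
    simp [quadrantDensity₁, hx1, hxy, max_eq_right (pow_le_one₀ hy0.le hy1)]
  have hmid : EqOn (fun y => ENNReal.ofReal (quadrantDensity₁ x y))
      (fun y => ENNReal.ofReal (y ^ 2)⁻¹) (Ioc 1 (1 / x ^ 2)) := by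
    intro y ⟨hy1, hyb⟩
    have hy : 1 ≤ y ^ 2 := one_le_pow₀ hy1.le
    rw [le_div_iff₀' hx2] at hyb
    simp [quadrantDensity₁, hx1, hyb, max_eq_left hy]
  have hhigh : EqOn (fun y => ENNReal.ofReal (quadrantDensity₁ x y)) 0 (Ioi (1 / x ^ 2)) := by
    intro y hy
    rw [mem_Ioi, div_lt_iff₀' hx2] at hy
    simp [quadrantDensity₁, not_le.2 hy]
  rw [lintegral_Ioi_eq_Ioc_add_Ioi _ zero_le_one, lintegral_Ioi_eq_Ioc_add_Ioi _ hb,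
    setLIntegral_congr_fun measurableSet_Ioc hlow, setLIntegral_congr_fun measurableSet_Ioc hmid,
    setLIntegral_eq_zero measurableSet_Ioi hhigh, lintegral_Ioc_inv_sq one_pos hb]
  simp only [Pi.one_apply, setLIntegral_one, Real.volume_Ioc, sub_zero, one_div, inv_one, inv_inv,
    add_zero]
  rw [← ENNReal.ofReal_add zero_le_one (sub_nonneg.2 hx21)]
  ring_nf

theorem lintegral_quadrantDensity₁ :
    ∫⁻ x in Ioi 0, ∫⁻ y in Ioi 0, ENNReal.ofReal (quadrantDensity₁ x y) =
      ENNReal.ofReal (5 / 3) := by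
  have hlow : EqOn (fun x => ∫⁻ y in Ioi 0, ENNReal.ofReal (quadrantDensity₁ x y))
      (fun x => ENNReal.ofReal (2 - x ^ 2)) (Ioc 0 1) := fun x hx =>
    lintegral_quadrantDensity₁_of_le_one hx.1 hx.2
  have hhigh : EqOn (fun x => ∫⁻ y in Ioi 0, ENNReal.ofReal (quadrantDensity₁ x y)) 0
      (Ioi 1) := fun x hx => by
    simp [quadrantDensity₁, not_le.2 (mem_Ioi.1 hx)]
  have hderiv : ∀ x ∈ Icc (0 : ℝ) 1, HasDerivAt (fun x => 2 * x - x ^ 3 / 3) (2 - x ^ 2) x := by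
    intro x _
    refine (((hasDerivAt_id' x).const_mul 2).sub
      ((hasDerivAt_pow 3 x).div_const 3)).congr_deriv ?_
    ring
  rw [lintegral_Ioi_eq_Ioc_add_Ioi _ zero_le_one, setLIntegral_congr_fun measurableSet_Ioc hlow,
    setLIntegral_eq_zero measurableSet_Ioi hhigh, lintegral_Ioc_ofReal_of_hasDerivAt_of_nonneg
      zero_le_one hderiv fun x hx => by nlinarith [hx.1, hx.2]]
  norm_num

noncomputable def quadrantDensity₂ (x y : ℝ) : ℝ := if 1 < x ∧ y ≤ x then 1 / x ^ 3 else 0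

theorem lintegral_quadrantDensity₂_of_one_lt {x : ℝ} (hx : 1 < x) :
    ∫⁻ y in Ioi 0, ENNReal.ofReal (quadrantDensity₂ x y) = ENNReal.ofReal (x ^ 2)⁻¹ := by
  have hx0 : 0 < x := one_pos.trans hx
  have hlow : EqOn (fun y => ENNReal.ofReal (quadrantDensity₂ x y))
      (fun _ => ENNReal.ofReal (1 / x ^ 3)) (Ioc 0 x) := fun y hy => by
    simp [quadrantDensity₂, hx, hy.2]
  have hhigh : EqOn (fun y => ENNReal.ofReal (quadrantDensity₂ x y)) 0 (Ioi x) := fun y hy => by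
    simp [quadrantDensity₂, not_le.2 (mem_Ioi.1 hy)]
  rw [lintegral_Ioi_eq_Ioc_add_Ioi _ hx0.le, setLIntegral_congr_fun measurableSet_Ioc hlow,
    setLIntegral_eq_zero measurableSet_Ioi hhigh, setLIntegral_const, Real.volume_Ioc,
    ← ENNReal.ofReal_mul (by positivity), add_zero, sub_zero]
  congr 1
  field_simp

theorem lintegral_quadrantDensity₂ :
    ∫⁻ x in Ioi 0, ∫⁻ y in Ioi 0, ENNReal.ofReal (quadrantDensity₂ x y) = ENNReal.ofReal 1 := by
  have hlow : EqOn (fun x => ∫⁻ y in Ioi 0, ENNReal.ofReal (quadrantDensity₂ x y)) 0 (Ioc 0 1) :=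
    fun x hx => by simp [quadrantDensity₂, not_lt.2 hx.2]
  have hhigh : EqOn (fun x => ∫⁻ y in Ioi 0, ENNReal.ofReal (quadrantDensity₂ x y))
      (fun x => ENNReal.ofReal (x ^ 2)⁻¹) (Ioi 1) := fun x hx =>
    lintegral_quadrantDensity₂_of_one_lt hx
  rw [lintegral_Ioi_eq_Ioc_add_Ioi _ zero_le_one, setLIntegral_eq_zero measurableSet_Ioc hlow,
    setLIntegral_congr_fun measurableSet_Ioi hhigh, lintegral_Ioi_inv_sq one_pos, zero_add, inv_one]

noncomputable def quadrantDensity₃ (x y : ℝ) : ℝ :=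
  if x < y ∧ 1 < x ^ 2 * y then 1 / max (y ^ 2) (x ^ 2 * y) else 0

theorem lintegral_quadrantDensity₃_of_le_one {x : ℝ} (hx0 : 0 < x) (hx1 : x ≤ 1) :
    ∫⁻ y in Ioi 0, ENNReal.ofReal (quadrantDensity₃ x y) = ENNReal.ofReal (x ^ 2) := by
  have hx2 : 0 < x ^ 2 := by positivity
  have hx21 : x ^ 2 ≤ 1 := by nlinarith
  have hb : 1 ≤ 1 / x ^ 2 := by rw [le_div_iff₀ hx2]; linarith
  have hlow : EqOn (fun y => ENNReal.ofReal (quadrantDensity₃ x y)) 0 (Ioc 0 (1 / x ^ 2)) := by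
    intro y hy
    rw [mem_Ioc, le_div_iff₀' hx2] at hy
    simp [quadrantDensity₃, not_lt.2 hy.2]
  have hhigh : EqOn (fun y => ENNReal.ofReal (quadrantDensity₃ x y))
      (fun y => ENNReal.ofReal (y ^ 2)⁻¹) (Ioi (1 / x ^ 2)) := by
    intro y hy
    have hy1 : 1 < y := hb.trans_lt hy
    rw [mem_Ioi, div_lt_iff₀' hx2] at hy
    have hmax : x ^ 2 * y ≤ y ^ 2 := by nlinarith
    simp [quadrantDensity₃, hx1.trans_lt hy1, hy, max_eq_left hmax]
  rw [lintegral_Ioi_eq_Ioc_add_Ioi _ (zero_lt_one.trans_le hb).le,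
    setLIntegral_eq_zero measurableSet_Ioc hlow, setLIntegral_congr_fun measurableSet_Ioi hhigh,
    lintegral_Ioi_inv_sq (zero_lt_one.trans_le hb), zero_add, one_div, inv_inv]

theorem lintegral_quadrantDensity₃_of_one_lt {x : ℝ} (hx : 1 < x) :
    ∫⁻ y in Ioi 0, ENNReal.ofReal (quadrantDensity₃ x y) =
      ENNReal.ofReal ((Real.log x + 1) / x ^ 2) := by
  have hx0 : 0 < x := one_pos.trans hx
  have hx2 : 0 < x ^ 2 := by positivity
  have hxx2 : x ≤ x ^ 2 := by nlinarith
  have hlow : EqOn (fun y => ENNReal.ofReal (quadrantDensity₃ x y)) 0 (Ioc 0 x) := fun y hy => by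
    simp [quadrantDensity₃, not_lt.2 hy.2]
  have hmid : EqOn (fun y => ENNReal.ofReal (quadrantDensity₃ x y))
      (fun y => ENNReal.ofReal (1 / (x ^ 2 * y))) (Ioc x (x ^ 2)) := by
    intro y ⟨hxy, hyx2⟩
    have h1 : 1 < x ^ 2 * y := by nlinarith
    have hmax : y ^ 2 ≤ x ^ 2 * y := by nlinarith
    simp [quadrantDensity₃, hxy, h1, max_eq_right hmax]
  have hhigh : EqOn (fun y => ENNReal.ofReal (quadrantDensity₃ x y))
      (fun y => ENNReal.ofReal (y ^ 2)⁻¹) (Ioi (x ^ 2)) := by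
    intro y hy
    have hxy : x < y := hxx2.trans_lt hy
    have h1 : 1 < x ^ 2 * y := by nlinarith
    have hmax : x ^ 2 * y ≤ y ^ 2 := by nlinarith [mem_Ioi.1 hy]
    simp [quadrantDensity₃, hxy, h1, max_eq_left hmax]
  have hderiv : ∀ y ∈ Icc x (x ^ 2),
      HasDerivAt (fun y => Real.log y / x ^ 2) (1 / (x ^ 2 * y)) y := by
    intro y hy
    have hy0 : y ≠ 0 := (hx0.trans_le hy.1).ne'
    refine ((Real.hasDerivAt_log hy0).div_const _).congr_deriv ?_
    field_simp
  rw [lintegral_Ioi_eq_Ioc_add_Ioi _ hx0.le, lintegral_Ioi_eq_Ioc_add_Ioi _ hxx2,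
    setLIntegral_eq_zero measurableSet_Ioc hlow, setLIntegral_congr_fun measurableSet_Ioc hmid,
    setLIntegral_congr_fun measurableSet_Ioi hhigh, lintegral_Ioi_inv_sq hx2,
    lintegral_Ioc_ofReal_of_hasDerivAt_of_nonneg hxx2 hderiv fun y hy => by
      have := hx0.trans hy.1; positivity,
    zero_add, Real.log_pow, ← ENNReal.ofReal_add (sub_nonneg.2 (div_le_div_of_nonneg_right
      (by push_cast; linarith [Real.log_nonneg hx.le]) hx2.le)) (by positivity)]
  congr 1
  field_simp
  ring

theorem lintegral_quadrantDensity₃ :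
    ∫⁻ x in Ioi 0, ∫⁻ y in Ioi 0, ENNReal.ofReal (quadrantDensity₃ x y) =
      ENNReal.ofReal (7 / 3) := by
  have hlow : EqOn (fun x => ∫⁻ y in Ioi 0, ENNReal.ofReal (quadrantDensity₃ x y))
      (fun x => ENNReal.ofReal (x ^ 2)) (Ioc 0 1) := fun x hx =>
    lintegral_quadrantDensity₃_of_le_one hx.1 hx.2
  have hhigh : EqOn (fun x => ∫⁻ y in Ioi 0, ENNReal.ofReal (quadrantDensity₃ x y))
      (fun x => ENNReal.ofReal ((Real.log x + 1) / x ^ 2)) (Ioi 1) := fun x hx =>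
    lintegral_quadrantDensity₃_of_one_lt hx
  have hderiv : ∀ x ∈ Icc (0 : ℝ) 1, HasDerivAt (fun x => x ^ 3 / 3) (x ^ 2) x := by
    intro x _
    refine ((hasDerivAt_pow 3 x).div_const 3).congr_deriv ?_
    ring
  rw [lintegral_Ioi_eq_Ioc_add_Ioi _ zero_le_one, setLIntegral_congr_fun measurableSet_Ioc hlow,
    setLIntegral_congr_fun measurableSet_Ioi hhigh, lintegral_Ioi_one_log_add_one_div_sq,
    lintegral_Ioc_ofReal_of_hasDerivAt_of_nonneg zero_le_one hderiv fun x _ => sq_nonneg x,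
    ← ENNReal.ofReal_add (by norm_num) zero_le_two]
  norm_num

theorem integral_region₁ :
    ∫ q in {q : ℝ × ℝ | |q.1| ≤ 1 ∧ |q.1 ^ 2 * q.2| ≤ 1}, 1 / max (|q.2| ^ 2) 1 = 20 / 3 := by
  have hS : MeasurableSet {q : ℝ × ℝ | |q.1| ≤ 1 ∧ |q.1 ^ 2 * q.2| ≤ 1} := by measurability
  rw [← integral_indicator hS, integral_eq_four_mul_of_lintegral_quadrant quadrantDensity₁
    ((by fun_prop : Measurable _).indicator hS) (indicator_nonneg fun q _ => by positivity)
    (fun q => by simp [indicator_apply, quadrantDensity₁, abs_mul, abs_pow])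
    lintegral_quadrantDensity₁ (by norm_num)]
  norm_num

theorem integral_region₂ :
    ∫ q in {q : ℝ × ℝ | 1 < |q.1| ∧ |q.2| ≤ |q.1|}, 1 / |q.1| ^ 3 = 4 := by
  have hS : MeasurableSet {q : ℝ × ℝ | 1 < |q.1| ∧ |q.2| ≤ |q.1|} := by measurability
  rw [← integral_indicator hS, integral_eq_four_mul_of_lintegral_quadrant quadrantDensity₂
    ((by fun_prop : Measurable _).indicator hS) (indicator_nonneg fun q _ => by positivity)
    (fun q => by simp [indicator_apply, quadrantDensity₂])
    lintegral_quadrantDensity₂ (by norm_num)]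
  norm_num

theorem integral_region₃ :
    ∫ q in {q : ℝ × ℝ | |q.1| < |q.2| ∧ 1 < |q.1 ^ 2 * q.2|},
      1 / max (|q.2| ^ 2) (|q.1 ^ 2 * q.2|) = 28 / 3 := by
  have hS : MeasurableSet {q : ℝ × ℝ | |q.1| < |q.2| ∧ 1 < |q.1 ^ 2 * q.2|} := by measurability
  rw [← integral_indicator hS, integral_eq_four_mul_of_lintegral_quadrant quadrantDensity₃
    ((by fun_prop : Measurable _).indicator hS) (indicator_nonneg fun q _ => by positivity)
    (fun q => by simp [indicator_apply, quadrantDensity₃, abs_mul, abs_pow])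
    lintegral_quadrantDensity₃ (by norm_num)]
  norm_num

/-- The archimedean residue volume `τ_{D₁,∞}(D₁(ℝ)) = 20`, decomposed into three regions:
`I₁ = ∫_{|a|≤1, |a²c|≤1} 1/max{|c|²,1}`, `I₂ = ∫_{|a|>1, |c|≤|a|} |a|^{-3}`,
`I₃ = ∫_{|c|>|a|, |a²c|>1} 1/max{|c|², |a²c|}`, with `I₁ + I₂ + I₃ = 20`.
Here the coordinates are `q = (a, c) ∈ ℝ²` with Lebesgue measure. -/
theorem residue_volume_D1 :
    (∫ q in {q : ℝ × ℝ | |q.1| ≤ 1 ∧ |q.1 ^ 2 * q.2| ≤ 1}, 1 / max (|q.2| ^ 2) 1) +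
      (∫ q in {q : ℝ × ℝ | 1 < |q.1| ∧ |q.2| ≤ |q.1|}, 1 / |q.1| ^ 3) +
      (∫ q in {q : ℝ × ℝ | |q.1| < |q.2| ∧ 1 < |q.1 ^ 2 * q.2|},
        1 / max (|q.2| ^ 2) (|q.1 ^ 2 * q.2|)) = 20 := by
  rw [integral_region₁, integral_region₂, integral_region₃]
  norm_num
end

section
/- For every prime p, the number of F_p-points of the scheme U₁ = X' − D̄₁, where X' is the blow-up of P³ over F_p in the conic V(a²+bc, d) and D̄₁ is the preimage of the plane V(b), equals p³ + p². -/
/-!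
Over `b ≠ 0` the conic is the smooth curve `a² + c = d = 0` in `𝔸³`, which becomes a coordinate
line after the change of variables `c ↦ c + a²`; hence `U₁ ≅ 𝔸¹ × Bl₀ 𝔸²`. A point of `Bl₀ 𝔸²`
is a line through the origin together with a point on it, so `Bl₀ 𝔸²` has `(p + 1) p` points
over `𝔽_p`, and `U₁` has `p (p + 1) p = p³ + p²`.

In Cox coordinates the torus invariants are `a / b` (the `𝔸¹` factor), the slope `y / (b x)` of
the line (`none` when `x = 0`), and the coordinate `x z / b` (resp. `y z / b²` when `x = 0`) of the
point on that line.
-/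

/-- A point of the universal torsor over the blow-up `X'` of `ℙ³` in the conic
`V(a²+bc, d)`, in Cox coordinates: the Cox ring of `X'` is
`K[a,b,c,x,y,z]/(a² + bc - yz)`. -/
structure TorsorPt (K : Type*) [Field K] where
  a : K
  b : K
  c : K
  x : K
  y : K
  z : K
  eqn : a ^ 2 + b * c = y * z

/-- The characteristic torus `(Kˣ)²` acts on the torsor with weights
`a, b, c : (1,0)`, `x : (1,-1)`, `y : (2,-1)`, `z : (0,1)`.  Points of
`U₁ = X' - π⁻¹(V(b))` over `K` are the orbits of solutions with `b ≠ 0` (which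
implies `(a,b,c,z) ≠ 0`) and `(x,y) ≠ (0,0)`.  This is the orbit relation. -/
def u1Rel (K : Type*) [Field K]
    (v w : {v : TorsorPt K // v.b ≠ 0 ∧ (v.x ≠ 0 ∨ v.y ≠ 0)}) : Prop :=
  ∃ s t : Kˣ,
    w.1.a = s * v.1.a ∧ w.1.b = s * v.1.b ∧ w.1.c = s * v.1.c ∧
    w.1.x = s * (t : K)⁻¹ * v.1.x ∧ w.1.y = (s : K) ^ 2 * (t : K)⁻¹ * v.1.y ∧
    w.1.z = t * v.1.z

abbrev U1Point (K : Type*) [Field K] := {v : TorsorPt K // v.b ≠ 0 ∧ (v.x ≠ 0 ∨ v.y ≠ 0)}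

namespace U1Point

variable {K : Type*} [Field K] [DecidableEq K]

def normalForm (v : U1Point K) : K × Option K × K :=
  if v.1.x = 0 then (v.1.a / v.1.b, none, v.1.y * v.1.z / v.1.b ^ 2)
  else (v.1.a / v.1.b, some (v.1.y / (v.1.b * v.1.x)), v.1.x * v.1.z / v.1.b)

def ofNormalForm : K × Option K × K → U1Point K
  | (a, none, w) => ⟨⟨a, 1, w - a ^ 2, 0, 1, w, by ring⟩, one_ne_zero, Or.inr one_ne_zero⟩
  | (a, some m, u) => ⟨⟨a, 1, m * u - a ^ 2, 1, m, u, by ring⟩, one_ne_zero, Or.inl one_ne_zero⟩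

theorem normalForm_ofNormalForm (d : K × Option K × K) : normalForm (ofNormalForm d) = d := by
  obtain ⟨a, _ | m, u⟩ := d <;> simp [normalForm, ofNormalForm]

theorem normalForm_eq_of_u1Rel {v w : U1Point K} (h : u1Rel K v w) :
    normalForm v = normalForm w := by
  obtain ⟨s, t, ha, hb, -, hx, hy, hz⟩ := h
  have hs : (s : K) ≠ 0 := s.ne_zero
  have ht : (t : K) ≠ 0 := t.ne_zero
  have hvb := v.2.1
  have hwx : w.1.x = 0 ↔ v.1.x = 0 := by simp [hx, hs, ht]
  unfold normalForm
  by_cases hvx : v.1.x = 0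
  · rw [if_pos hvx, if_pos (hwx.mpr hvx), ha, hb, hy, hz]
    field_simp
  · rw [if_neg hvx, if_neg (mt hwx.mp hvx), ha, hb, hx, hy, hz]
    field_simp

theorem u1Rel_ofNormalForm_normalForm (v : U1Point K) :
    u1Rel K (ofNormalForm (normalForm v)) v := by
  obtain ⟨⟨a, b, c, x, y, z, hcox⟩, hb, hxy⟩ := v
  by_cases hx : x = 0
  · subst hx
    have hy : y ≠ 0 := hxy.resolve_left (not_not.mpr rfl)
    refine ⟨Units.mk0 b hb, Units.mk0 (b ^ 2 / y) (by positivity), ?_⟩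
    simp only [normalForm, ofNormalForm, if_true, Units.val_mk0, mul_zero, true_and]
    refine ⟨?_, ?_, ?_, ?_, ?_⟩ <;> field_simp
    linear_combination hcox
  · refine ⟨Units.mk0 b hb, Units.mk0 (b / x) (div_ne_zero hb hx), ?_⟩
    simp only [normalForm, ofNormalForm, hx, if_false, Units.val_mk0]
    refine ⟨?_, ?_, ?_, ?_, ?_, ?_⟩ <;> field_simp
    linear_combination hcox

end U1Point

def u1QuotEquiv (K : Type*) [Field K] [DecidableEq K] :
    Quot (u1Rel K) ≃ K × Option K × K where
  toFun := Quot.lift U1Point.normalForm fun _ _ ↦ U1Point.normalForm_eq_of_u1Rel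
  invFun d := Quot.mk _ (U1Point.ofNormalForm d)
  left_inv := Quot.ind fun v ↦ Quot.sound (U1Point.u1Rel_ofNormalForm_normalForm v)
  right_inv := U1Point.normalForm_ofNormalForm

/-- The number of `F_p`-points of `U₁ = X' - D̄₁`, where `X'` is the blow-up of `ℙ³`
over `F_p` in the conic `V(a²+bc, d)` and `D̄₁` is the preimage of the plane `V(b)`,
equals `p³ + p²`.  (Points of `U₁` over `F_p` are identified with orbits of the
characteristic torus on the `F_p`-points of the universal torsor with `b ≠ 0`.) -/
theorem card_U1_Fp (p : ℕ) [Fact p.Prime] :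
    Nat.card (Quot (u1Rel (ZMod p))) = p ^ 3 + p ^ 2 := by
  rw [Nat.card_congr (u1QuotEquiv (ZMod p)), Nat.card_prod, Nat.card_prod,
    Nat.card_eq_fintype_card, Nat.card_eq_fintype_card, Fintype.card_option, ZMod.card]
  ring
end

section
/- For every prime p, the number of F_p-points of U₂ = X' − D̄₂, where X' is the blow-up of P³ over F_p in the conic V(a²+bc, d) and D̄₂ is the preimage of the plane V(a), equals p³ + p² − p. -/
/-- The characteristic torus `(Kˣ)²` acts on the torsor with weights
`a, b, c : (1,0)`, `x : (1,-1)`, `y : (2,-1)`, `z : (0,1)`.  Points of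
`U₂ = X' - π⁻¹(V(a))` over `K` are the orbits of solutions with `b ≠ 0` (which
implies `(a,b,c,z) ≠ 0`) and `(x,y) ≠ (0,0)`.  This is the orbit relation. -/
def u2Rel (K : Type*) [Field K]
    (v w : {v : TorsorPt K // v.a ≠ 0 ∧ (v.x ≠ 0 ∨ v.y ≠ 0)}) : Prop :=
  ∃ s t : Kˣ,
    w.1.a = s * v.1.a ∧ w.1.b = s * v.1.b ∧ w.1.c = s * v.1.c ∧
    w.1.x = s * (t : K)⁻¹ * v.1.x ∧ w.1.y = (s : K) ^ 2 * (t : K)⁻¹ * v.1.y ∧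
    w.1.z = t * v.1.z

/-!
Normalise the torus action over a field with `q` elements. If `y ≠ 0`, the torus moves a point
to one with `a = y = 1`; there `(b, c, x)` is free and the torsor equation forces `z = 1 + bc`,
giving `q³` orbits. If `y = 0`, then `x ≠ 0` and the torus moves the point to one with
`a = x = 1`; the equation `1 + bc = 0` forces `b ≠ 0` and `c = -b⁻¹`, while `z` is free, giving
`(q - 1) q` orbits.
-/

namespace TorsorPt

variable {K : Type*} [Field K]

abbrev U2Point (K : Type*) [Field K] := {v : TorsorPt K // v.a ≠ 0 ∧ (v.x ≠ 0 ∨ v.y ≠ 0)}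

lemma b_ne_zero_of_y_eq_zero (v : TorsorPt K) (ha : v.a ≠ 0) (hy : v.y = 0) : v.b ≠ 0 := by
  intro hb
  have h := v.eqn
  rw [hy, hb] at h
  simp only [zero_mul, add_zero, ne_eq, OfNat.ofNat_ne_zero, not_false_eq_true,
    pow_eq_zero_iff] at h
  exact ha h

open Classical in
/-- The coordinates `(b, c, x)`, resp. `(b, z)`, of the normal form of the orbit of `v`. -/
noncomputable def u2Invariants (v : U2Point K) : (K × K × K) ⊕ (Kˣ × K) :=
  if hy : v.1.y ≠ 0 then Sum.inl (v.1.b / v.1.a, v.1.c / v.1.a, v.1.x * v.1.a / v.1.y)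
  else Sum.inr (Units.mk0 (v.1.b / v.1.a)
      (div_ne_zero (b_ne_zero_of_y_eq_zero v.1 v.2.1 (not_not.mp hy)) v.2.1),
    v.1.z * v.1.x / v.1.a)

lemma u2Invariants_eq_of_u2Rel {v w : U2Point K} (h : u2Rel K v w) :
    u2Invariants v = u2Invariants w := by
  obtain ⟨s, t, ha, hb, hc, hx, hy, hz⟩ := h
  have hs : (s : K) ≠ 0 := s.ne_zero
  have ht : (t : K) ≠ 0 := t.ne_zero
  have hva : v.1.a ≠ 0 := v.2.1
  have hy_iff : w.1.y ≠ 0 ↔ v.1.y ≠ 0 := by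
    rw [hy]
    simp [hs, ht]
  unfold u2Invariants
  by_cases hvy : v.1.y ≠ 0
  · rw [dif_pos hvy, dif_pos (hy_iff.mpr hvy), ha, hb, hc, hx, hy]
    congr 1
    refine Prod.ext ?_ (Prod.ext ?_ ?_) <;> field_simp
  · rw [dif_neg hvy, dif_neg (mt hy_iff.mp hvy)]
    congr 1
    refine Prod.ext (Units.ext ?_) ?_
    · simp only [Units.val_mk0, ha, hb]
      field_simp
    · simp only [ha, hx, hz]
      field_simp

def u2NormalForm : (K × K × K) ⊕ (Kˣ × K) → U2Point K
  | Sum.inl (b, c, x) =>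
    ⟨⟨1, b, c, x, 1, 1 + b * c, by ring⟩, one_ne_zero, Or.inr one_ne_zero⟩
  | Sum.inr (b, z) =>
    ⟨⟨1, b, -(b : K)⁻¹, 1, 0, z, by simp⟩, one_ne_zero, Or.inl one_ne_zero⟩

@[simp]
lemma u2NormalForm_inl (b c x : K) : (u2NormalForm (.inl (b, c, x))).1 =
    ⟨1, b, c, x, 1, 1 + b * c, by ring⟩ := rfl

@[simp]
lemma u2NormalForm_inr (b : Kˣ) (z : K) : (u2NormalForm (.inr (b, z))).1 =
    ⟨1, b, -(b : K)⁻¹, 1, 0, z, by simp⟩ := rfl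

lemma u2Rel_u2NormalForm_u2Invariants (v : U2Point K) :
    u2Rel K (u2NormalForm (u2Invariants v)) v := by
  obtain ⟨⟨a, b, c, x, y, z, hxyz⟩, ha, hxy⟩ := v
  dsimp only at ha hxy
  unfold u2Invariants
  by_cases hy : y ≠ 0
  · rw [dif_pos hy]
    refine ⟨Units.mk0 a ha, Units.mk0 (a ^ 2 / y) (by positivity), ?_, ?_, ?_, ?_, ?_, ?_⟩ <;>
      simp only [u2NormalForm_inl, Units.val_mk0] <;> field_simp
    linear_combination -hxyz
  · rw [dif_neg hy]
    rw [not_not] at hy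
    subst hy
    have hx : x ≠ 0 := hxy.resolve_right (not_not.mpr rfl)
    have hb : b ≠ 0 := b_ne_zero_of_y_eq_zero ⟨a, b, c, x, 0, z, hxyz⟩ ha rfl
    refine ⟨Units.mk0 a ha, Units.mk0 (a / x) (div_ne_zero ha hx), ?_, ?_, ?_, ?_, ?_, ?_⟩ <;>
      simp only [u2NormalForm_inr, Units.val_mk0] <;> field_simp
    · linear_combination hxyz
    · ring

lemma u2Invariants_u2NormalForm (n : (K × K × K) ⊕ (Kˣ × K)) :
    u2Invariants (u2NormalForm n) = n := by
  rcases n with ⟨b, c, x⟩ | ⟨b, z⟩ <;> simp [u2Invariants]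

noncomputable def u2QuotEquiv : Quot (u2Rel K) ≃ (K × K × K) ⊕ (Kˣ × K) where
  toFun := Quot.lift u2Invariants fun _ _ => u2Invariants_eq_of_u2Rel
  invFun n := Quot.mk _ (u2NormalForm n)
  left_inv := Quot.ind fun v => Quot.sound (u2Rel_u2NormalForm_u2Invariants v)
  right_inv := u2Invariants_u2NormalForm

lemma card_quot_u2Rel [Finite K] :
    Nat.card (Quot (u2Rel K)) = Nat.card K ^ 3 + Nat.card Kˣ * Nat.card K := by
  rw [Nat.card_congr u2QuotEquiv, Nat.card_sum, Nat.card_prod, Nat.card_prod, Nat.card_prod]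
  ring

end TorsorPt

/-- The number of `F_p`-points of `U₂ = X' - D̄₂`, where `X'` is the blow-up of `ℙ³`
over `F_p` in the conic `V(a²+bc, d)` and `D̄₂` is the preimage of the plane `V(a)`,
equals `p³ + p² - p`.  (Points of `U₂` over `F_p` are identified with orbits of the
characteristic torus on the `F_p`-points of the universal torsor with `a ≠ 0`.) -/
theorem card_U2_Fp (p : ℕ) [Fact p.Prime] :
    Nat.card (Quot (u2Rel (ZMod p))) = p ^ 3 + p ^ 2 - p := by
  have hunits : Nat.card (ZMod p)ˣ = p - 1 := by
    rw [Nat.card_eq_fintype_card, ZMod.card_units_eq_totient, Nat.totient_prime Fact.out]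
  rw [TorsorPt.card_quot_u2Rel, Nat.card_zmod, hunits, Nat.sub_one_mul, ← sq]
  have : p ≤ p ^ 2 := Nat.le_self_pow two_ne_zero p
  omega
end
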